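/- For the d-dimensional Student family with ν degrees of freedom written as a λ-exponential family with λ = −2/(ν+d) and T(x) = (x, xxᵀ), the natural parameters associated to (μ, Σ) ∈ ℝ^d × S_{++}^d are ϑ₁ = (ν+d)/(ν + μᵀΣ⁻¹μ) · Σ⁻¹μ and ϑ₂ = −(ν+d)/(2(ν + μᵀΣ⁻¹μ)) · Σ⁻¹, and the inverse map is μ = −½ ϑ₂⁻¹ ϑ₁ and Σ = −(2(ν+d) + ϑ₁ᵀϑ₂⁻¹ϑ₁)/(4ν) · ϑ₂⁻¹; these maps are mutually inverse bijections between ℝ^d × S_{++}^d and {(ϑ₁,ϑ₂) ∈ ℝ^d × S_{--}^d : 2(ν+d) + ϑ₁ᵀϑ₂⁻¹ϑ₁ > 0}. -/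

import Mathlib

/-!
Both maps send a point `(x, M)` to `(b • M⁻¹ *ᵥ x, a • M⁻¹)` for scalars `a ≠ 0`, `b` depending on
the point, and `(a • M)⁻¹ *ᵥ (b • M *ᵥ v) = (b / a) • v`. Composing them therefore only rescales
the original point, and both round trips reduce to scalar identities, the key one being
`ν + μᵀΣ⁻¹μ = 2ν(ν+d) / (2(ν+d) + ϑ₁ᵀϑ₂⁻¹ϑ₁)` and its mirror image for the inverse map.
Definiteness is preserved because the scalar factors have the right signs.
-/

open Matrix

/-- First natural parameter `ϑ₁ = (ν+d)/(ν + μᵀΣ⁻¹μ) · Σ⁻¹μ` of the Student family. -/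
noncomputable def natParam1 (d : ℕ) (ν : ℝ) (μ : Fin d → ℝ)
    (S : Matrix (Fin d) (Fin d) ℝ) : Fin d → ℝ :=
  ((ν + d) / (ν + μ ⬝ᵥ S⁻¹.mulVec μ)) • S⁻¹.mulVec μ

/-- Second natural parameter `ϑ₂ = −(ν+d)/(2(ν + μᵀΣ⁻¹μ)) · Σ⁻¹`. -/
noncomputable def natParam2 (d : ℕ) (ν : ℝ) (μ : Fin d → ℝ)
    (S : Matrix (Fin d) (Fin d) ℝ) : Matrix (Fin d) (Fin d) ℝ :=
  (-((ν + d) / (2 * (ν + μ ⬝ᵥ S⁻¹.mulVec μ)))) • S⁻¹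

/-- Inverse map: location `μ = −½ ϑ₂⁻¹ ϑ₁`. -/
noncomputable def invLoc (d : ℕ) (t1 : Fin d → ℝ)
    (t2 : Matrix (Fin d) (Fin d) ℝ) : Fin d → ℝ :=
  (-(1 : ℝ) / 2) • t2⁻¹.mulVec t1

/-- Inverse map: shape `Σ = −(2(ν+d) + ϑ₁ᵀϑ₂⁻¹ϑ₁)/(4ν) · ϑ₂⁻¹`. -/
noncomputable def invShape (d : ℕ) (ν : ℝ) (t1 : Fin d → ℝ)
    (t2 : Matrix (Fin d) (Fin d) ℝ) : Matrix (Fin d) (Fin d) ℝ :=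
  (-((2 * (ν + d) + t1 ⬝ᵥ t2⁻¹.mulVec t1) / (4 * ν))) • t2⁻¹

namespace Matrix

variable {n K : Type*} [Fintype n] [DecidableEq n] [Field K]

theorem inv_smul_of_ne_zero {k : K} (hk : k ≠ 0) {A : Matrix n n K} (hA : IsUnit A.det) :
    (k • A)⁻¹ = k⁻¹ • A⁻¹ :=
  inv_smul' A (Units.mk0 k hk) hA

theorem inv_neg (A : Matrix n n K) : (-A)⁻¹ = -A⁻¹ := by
  by_cases hA : IsUnit A.det
  · rw [← neg_one_smul K A, inv_smul_of_ne_zero (neg_ne_zero.mpr one_ne_zero) hA, _root_.inv_neg,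
      inv_one, neg_one_smul]
  · have hA' : ¬ IsUnit (-A).det := by simpa [det_neg] using hA
    rw [nonsing_inv_apply_not_isUnit _ hA, nonsing_inv_apply_not_isUnit _ hA', neg_zero]

theorem inv_smul_mulVec_smul_mulVec {a : K} (ha : a ≠ 0) (b : K) {M : Matrix n n K}
    (hM : IsUnit M.det) (v : n → K) : (a • M)⁻¹ *ᵥ (b • (M *ᵥ v)) = (b / a) • v := by
  rw [inv_smul_of_ne_zero ha hM, mulVec_smul, smul_mulVec, mulVec_mulVec,
    nonsing_inv_mul _ hM, one_mulVec, smul_smul, div_eq_mul_inv]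

theorem PosDef.dotProduct_inv_mulVec_nonneg {S : Matrix n n ℝ} (hS : S.PosDef) (v : n → ℝ) :
    0 ≤ v ⬝ᵥ S⁻¹ *ᵥ v := by
  simpa using hS.inv.posSemidef.dotProduct_mulVec_nonneg v

theorem PosDef.isUnit_det_of_neg {A : Matrix n n ℝ} (hA : (-A).PosDef) : IsUnit A.det := by
  simpa [isUnit_iff_isUnit_det] using hA.isUnit.neg

end Matrix

section Forward

variable {d : ℕ} {ν : ℝ} {μ : Fin d → ℝ} {S : Matrix (Fin d) (Fin d) ℝ}

theorem natParam2_inv (hνd : ν + d ≠ 0) (hνq : ν + μ ⬝ᵥ S⁻¹ *ᵥ μ ≠ 0) (hS : IsUnit S.det) :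
    (natParam2 d ν μ S)⁻¹ = (-(2 * (ν + μ ⬝ᵥ S⁻¹ *ᵥ μ) / (ν + d))) • S := by
  rw [natParam2, inv_smul_of_ne_zero (by simp [hνd, hνq]) (S.isUnit_nonsing_inv_det hS),
    nonsing_inv_nonsing_inv S hS, _root_.inv_neg, inv_div]

theorem natParam2_inv_mulVec_natParam1 (hνd : ν + d ≠ 0) (hνq : ν + μ ⬝ᵥ S⁻¹ *ᵥ μ ≠ 0)
    (hS : IsUnit S.det) : (natParam2 d ν μ S)⁻¹ *ᵥ natParam1 d ν μ S = (-2 : ℝ) • μ := by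
  rw [natParam2, natParam1, inv_smul_mulVec_smul_mulVec (by simp [hνd, hνq])
    _ (S.isUnit_nonsing_inv_det hS)]
  congr 1
  field_simp

theorem two_mul_add_natParam1_dotProduct (hνd : ν + d ≠ 0) (hνq : ν + μ ⬝ᵥ S⁻¹ *ᵥ μ ≠ 0)
    (hS : IsUnit S.det) :
    2 * (ν + d) + natParam1 d ν μ S ⬝ᵥ (natParam2 d ν μ S)⁻¹ *ᵥ natParam1 d ν μ S
      = 2 * ν * (ν + d) / (ν + μ ⬝ᵥ S⁻¹ *ᵥ μ) := by
  rw [natParam2_inv_mulVec_natParam1 hνd hνq hS, natParam1, smul_dotProduct, dotProduct_smul,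
    dotProduct_comm (S⁻¹ *ᵥ μ), smul_eq_mul, smul_eq_mul]
  field_simp
  ring

theorem invLoc_natParam (hνd : ν + d ≠ 0) (hνq : ν + μ ⬝ᵥ S⁻¹ *ᵥ μ ≠ 0) (hS : IsUnit S.det) :
    invLoc d (natParam1 d ν μ S) (natParam2 d ν μ S) = μ := by
  rw [invLoc, natParam2_inv_mulVec_natParam1 hνd hνq hS, smul_smul]
  norm_num

theorem invShape_natParam (hν : ν ≠ 0) (hνd : ν + d ≠ 0) (hνq : ν + μ ⬝ᵥ S⁻¹ *ᵥ μ ≠ 0)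
    (hS : IsUnit S.det) : invShape d ν (natParam1 d ν μ S) (natParam2 d ν μ S) = S := by
  rw [invShape, two_mul_add_natParam1_dotProduct hνd hνq hS, natParam2_inv hνd hνq hS, smul_smul]
  convert one_smul ℝ S
  field_simp
  ring

theorem posDef_neg_natParam2 (hν : 0 < ν) (hS : S.PosDef) :
    (-natParam2 d ν μ S).PosDef := by
  rw [natParam2, neg_smul, neg_neg]
  have hq := hS.dotProduct_inv_mulVec_nonneg μ
  exact hS.inv.smul (by positivity)

end Forward

section Backward

variable {d : ℕ} {ν : ℝ} {t1 : Fin d → ℝ} {t2 : Matrix (Fin d) (Fin d) ℝ}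

theorem invShape_inv (hν : ν ≠ 0) (hK : 2 * (ν + d) + t1 ⬝ᵥ t2⁻¹ *ᵥ t1 ≠ 0)
    (ht2 : IsUnit t2.det) :
    (invShape d ν t1 t2)⁻¹ = (-(4 * ν / (2 * (ν + d) + t1 ⬝ᵥ t2⁻¹ *ᵥ t1))) • t2 := by
  rw [invShape, inv_smul_of_ne_zero (by simp [hν, hK]) (t2.isUnit_nonsing_inv_det ht2),
    nonsing_inv_nonsing_inv t2 ht2, _root_.inv_neg, inv_div]

theorem invShape_inv_mulVec_invLoc (hν : ν ≠ 0) (hK : 2 * (ν + d) + t1 ⬝ᵥ t2⁻¹ *ᵥ t1 ≠ 0)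
    (ht2 : IsUnit t2.det) :
    (invShape d ν t1 t2)⁻¹ *ᵥ invLoc d t1 t2
      = (2 * ν / (2 * (ν + d) + t1 ⬝ᵥ t2⁻¹ *ᵥ t1)) • t1 := by
  rw [invShape, invLoc, inv_smul_mulVec_smul_mulVec (by simp [hν, hK]) _
    (t2.isUnit_nonsing_inv_det ht2)]
  congr 1
  field_simp
  norm_num

theorem add_invLoc_dotProduct (hν : ν ≠ 0) (hK : 2 * (ν + d) + t1 ⬝ᵥ t2⁻¹ *ᵥ t1 ≠ 0)
    (ht2 : IsUnit t2.det) :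
    ν + invLoc d t1 t2 ⬝ᵥ (invShape d ν t1 t2)⁻¹ *ᵥ invLoc d t1 t2
      = 2 * ν * (ν + d) / (2 * (ν + d) + t1 ⬝ᵥ t2⁻¹ *ᵥ t1) := by
  rw [invShape_inv_mulVec_invLoc hν hK ht2, invLoc, smul_dotProduct, dotProduct_smul,
    dotProduct_comm (t2⁻¹ *ᵥ t1)]
  set K := 2 * (ν + d) + t1 ⬝ᵥ t2⁻¹ *ᵥ t1 with hKdef
  rw [smul_eq_mul, smul_eq_mul, show t1 ⬝ᵥ t2⁻¹ *ᵥ t1 = K - 2 * (ν + d) by rw [hKdef]; ring]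
  field_simp
  ring

theorem natParam1_invLoc_invShape (hν : ν ≠ 0) (hνd : ν + d ≠ 0)
    (hK : 2 * (ν + d) + t1 ⬝ᵥ t2⁻¹ *ᵥ t1 ≠ 0) (ht2 : IsUnit t2.det) :
    natParam1 d ν (invLoc d t1 t2) (invShape d ν t1 t2) = t1 := by
  rw [natParam1, add_invLoc_dotProduct hν hK ht2, invShape_inv_mulVec_invLoc hν hK ht2, smul_smul]
  convert one_smul ℝ t1
  set K := 2 * (ν + d) + t1 ⬝ᵥ t2⁻¹ *ᵥ t1
  field_simp

theorem natParam2_invLoc_invShape (hν : ν ≠ 0) (hνd : ν + d ≠ 0)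
    (hK : 2 * (ν + d) + t1 ⬝ᵥ t2⁻¹ *ᵥ t1 ≠ 0) (ht2 : IsUnit t2.det) :
    natParam2 d ν (invLoc d t1 t2) (invShape d ν t1 t2) = t2 := by
  rw [natParam2, add_invLoc_dotProduct hν hK ht2, invShape_inv hν hK ht2, smul_smul]
  convert one_smul ℝ t2
  set K := 2 * (ν + d) + t1 ⬝ᵥ t2⁻¹ *ᵥ t1
  field_simp
  ring

theorem posDef_invShape (hν : 0 < ν) (ht2 : (-t2).PosDef)
    (hK : 0 < 2 * (ν + d) + t1 ⬝ᵥ t2⁻¹ *ᵥ t1) : (invShape d ν t1 t2).PosDef := by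
  rw [invShape, neg_smul, ← smul_neg, ← Matrix.inv_neg]
  exact ht2.inv.smul (by positivity)

end Backward

/-- Proposition 3(i): the natural parameterization of the Student family and its inverse
are mutually inverse bijections between `ℝ^d × S_{++}^d` and
`{(ϑ₁,ϑ₂) ∈ ℝ^d × S_{--}^d : 2(ν+d) + ϑ₁ᵀϑ₂⁻¹ϑ₁ > 0}`. -/
theorem student_natural_parameters_bijection (d : ℕ) (ν : ℝ) (hν : 0 < ν) :
    (∀ (μ : Fin d → ℝ) (S : Matrix (Fin d) (Fin d) ℝ), S.PosDef →
      (-(natParam2 d ν μ S)).PosDef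
      ∧ 0 < 2 * (ν + d)
          + (natParam1 d ν μ S) ⬝ᵥ (natParam2 d ν μ S)⁻¹.mulVec (natParam1 d ν μ S)
      ∧ invLoc d (natParam1 d ν μ S) (natParam2 d ν μ S) = μ
      ∧ invShape d ν (natParam1 d ν μ S) (natParam2 d ν μ S) = S)
    ∧ (∀ (t1 : Fin d → ℝ) (t2 : Matrix (Fin d) (Fin d) ℝ), (-t2).PosDef →
        0 < 2 * (ν + d) + t1 ⬝ᵥ t2⁻¹.mulVec t1 →
        (invShape d ν t1 t2).PosDef
        ∧ natParam1 d ν (invLoc d t1 t2) (invShape d ν t1 t2) = t1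
        ∧ natParam2 d ν (invLoc d t1 t2) (invShape d ν t1 t2) = t2) := by
  have hνd : 0 < ν + d := by positivity
  refine ⟨fun μ S hS ↦ ?_, fun t1 t2 ht2 hK ↦ ?_⟩
  · have hνq : 0 < ν + μ ⬝ᵥ S⁻¹ *ᵥ μ := by
      linarith [hS.dotProduct_inv_mulVec_nonneg μ]
    have hS' : IsUnit S.det := (isUnit_iff_isUnit_det S).mp hS.isUnit
    refine ⟨posDef_neg_natParam2 hν hS, ?_, invLoc_natParam hνd.ne' hνq.ne' hS',
      invShape_natParam hν.ne' hνd.ne' hνq.ne' hS'⟩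
    rw [two_mul_add_natParam1_dotProduct hνd.ne' hνq.ne' hS']
    positivity
  · have ht2' := ht2.isUnit_det_of_neg
    exact ⟨posDef_invShape hν ht2 hK, natParam1_invLoc_invShape hν.ne' hνd.ne' hK.ne' ht2',
      natParam2_invLoc_invShape hν.ne' hνd.ne' hK.ne' ht2'⟩
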